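/- Let G be a finite simple graph that is the join of two graphs on disjoint nonempty vertex sets A and B (i.e. every vertex of A is adjacent in G to every vertex of B), and let T be a spanning tree of G whose set of internal nodes meets both A and B. Then there exists a transformation from T to a spanning tree T' of G having at most two internal nodes, one in A and one in B, such that every tree S of the sequence satisfies in(S) ⊆ in(T). -/

import Mathlib

/-!
Pick internal nodes `a ∈ A` and `b ∈ B` of `T`, and let `D` be the double star joining `a` to
all of `B` and `b` to all of `A`: a spanning tree of `G` whose internal nodes are `a` and `b`.
While a spanning tree `S` differs from `D`, take an edge `uw` of `D` missing from `S` with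
`u ∈ {a, b}`, and exchange it for an edge of the `S`-path from `u` to `w` that is not in `D`
(one exists since `D` is acyclic). If `w` is a leaf of `S`, the last edge of that path is such
an edge, and exchanging it keeps `w` a leaf. So no vertex outside `in(T)` becomes internal,
and each exchange adds one more edge of `D`.
-/

open SimpleGraph

/-- `T` is a spanning tree of `G`: a subgraph of `G` (on the same vertex set)
that is a tree. Being a tree on the whole vertex type, it contains all vertices. -/
def IsSpanningTree {V : Type*} (G T : SimpleGraph V) : Prop :=
  T ≤ G ∧ T.IsTree

/-- `T₁` and `T₂` differ by an edge flip: there are edges `e ∈ E(T₁) \ E(T₂)` and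
`f ∈ E(T₂) \ E(T₁)` with `E(T₂) = (E(T₁) \ {e}) ∪ {f}`. -/
def EdgeFlip {V : Type*} (T₁ T₂ : SimpleGraph V) : Prop :=
  ∃ e ∈ T₁.edgeSet, e ∉ T₂.edgeSet ∧
    ∃ f ∈ T₂.edgeSet, f ∉ T₁.edgeSet ∧ T₂.edgeSet = (T₁.edgeSet \ {e}) ∪ {f}

/-- The internal nodes of `T`: vertices that are not leaves (a leaf has degree one). -/
def internalNodes {V : Type*} (T : SimpleGraph V) : Set V :=
  {v | (T.neighborSet v).ncard ≠ 1}

/-- One step of a transformation keeping property `P`: both trees are spanning trees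
of `G` satisfying `P`, and they differ by an edge flip. -/
def Step {V : Type*} (G : SimpleGraph V) (P : SimpleGraph V → Prop)
    (T₁ T₂ : SimpleGraph V) : Prop :=
  IsSpanningTree G T₁ ∧ IsSpanningTree G T₂ ∧ P T₁ ∧ P T₂ ∧ EdgeFlip T₁ T₂

/-- There is a transformation from `T₁` to `T₂`: a finite sequence of spanning trees of `G`,
all satisfying `P`, starting at `T₁`, ending at `T₂`, consecutive ones differing by an
edge flip. -/
def Transformable {V : Type*} (G : SimpleGraph V) (P : SimpleGraph V → Prop)
    (T₁ T₂ : SimpleGraph V) : Prop :=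
  Relation.ReflTransGen (Step G P) T₁ T₂

namespace SimpleGraph

variable {V : Type*} {G S D : SimpleGraph V}

lemma Walk.IsCycle.not_subsingleton_neighborSet {u v : V} {c : G.Walk v v} (hc : c.IsCycle)
    (hu : u ∈ c.support) : ¬ (G.neighborSet u).Subsingleton := by
  classical
  have hc' := hc.rotate hu
  exact fun h => hc'.snd_ne_penultimate <|
    h (Walk.adj_snd hc'.not_nil) (Walk.adj_penultimate hc'.not_nil).symm

lemma isAcyclic_of_neighborSet_subsingleton {a b : V}
    (h : ∀ v, v ≠ a → v ≠ b → (G.neighborSet v).Subsingleton) : G.IsAcyclic := by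
  intro v c hc
  have hab : ∀ u ∈ c.support, u = a ∨ u = b := fun u hu => by
    by_contra! hne
    exact hc.not_subsingleton_neighborSet hu (h u hne.1 hne.2)
  have hv := hab v c.start_mem_support
  have hsnd := hab _ (c.getVert_mem_support 1)
  have hpen := hab _ (c.getVert_mem_support (c.length - 1))
  have h₁ := (c.adj_snd hc.not_nil).ne
  have h₂ := (c.adj_penultimate hc.not_nil).ne
  have h₃ := hc.snd_ne_penultimate
  simp only [Walk.snd, Walk.penultimate] at *
  grind

lemma IsAcyclic.not_reachable_deleteEdges {u w : V} (hS : S.IsAcyclic) {p : S.Walk u w}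
    (hp : p.IsPath) {e : Sym2 V} (he : e ∈ p.edges) : ¬ (S.deleteEdges {e}).Reachable u w := by
  classical
  rintro ⟨q⟩
  let q' := q.mapLe (deleteEdges_le {e})
  have hpq : (⟨p, hp⟩ : S.Path u w) = q'.toPath := (hS.subsingleton_path u w).elim _ _
  have he' : e ∈ q.edges := by
    simpa [q'] using q'.edges_toPath_subset_edges (congrArg Subtype.val hpq ▸ he)
  simpa using q.edges_subset_edgeSet he'

lemma IsTree.sup_edge_deleteEdges {u w : V} (hS : S.IsTree) {p : S.Walk u w} (hp : p.IsPath)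
    {e : Sym2 V} (he : e ∈ p.edges) (huw : ¬ S.Adj u w) :
    ((S ⊔ edge u w).deleteEdges {e}).IsTree := by
  have hne : u ≠ w := by
    rintro rfl
    simp [Walk.eq_nil_iff_nil.mpr (Walk.isPath_iff_nil.mp hp)] at he
  refine ⟨?_, ?_⟩
  · induction e using Sym2.ind with
    | _ x y =>
      refine (hS.connected.mono le_sup_left).connected_delete_edge_of_not_isBridge fun hbr => ?_
      have hwu : (S ⊔ edge u w).Adj w u :=
        Or.inr ((edge_adj _ _ _ _).mpr ⟨Or.inr ⟨rfl, rfl⟩, hne.symm⟩)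
      have hcyc : (Walk.cons hwu (p.mapLe le_sup_left)).IsCycle := by
        refine (Walk.cons_isCycle_iff _ _).mpr ⟨hp.mapLe le_sup_left, fun hf => huw ?_⟩
        have := p.edges_subset_edgeSet (by simpa using hf)
        rwa [Sym2.eq_swap, mem_edgeSet] at this
      exact hbr.notMem_edges_of_isCycle hcyc (by simp [he])
  · have hle : (S ⊔ edge u w).deleteEdges {e} ≤ S.deleteEdges {e} ⊔ edge u w := by
      rw [deleteEdges_sup]
      exact sup_le_sup_left (deleteEdges_le _) _
    exact (IsAcyclic.sup_edge_of_not_reachable (hS.isAcyclic.not_reachable_deleteEdges hp he)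
      (hS.isAcyclic.anti (deleteEdges_le _))).anti hle

lemma edgeSet_sup_edge_deleteEdges {u w : V} {e : Sym2 V} (hne : u ≠ w) (hef : e ≠ s(u, w)) :
    ((S ⊔ edge u w).deleteEdges {e}).edgeSet = (S.edgeSet \ {e}) ∪ {s(u, w)} := by
  rw [edgeSet_deleteEdges, edgeSet_sup, edgeSet_edge_of_ne hne, Set.union_sdiff_distrib,
    Set.sdiff_singleton_eq_self (Set.mem_singleton_iff.not.mpr hef)]

lemma edgeFlip_sup_edge_deleteEdges {u w : V} {e : Sym2 V} (he : e ∈ S.edgeSet)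
    (huw : ¬ S.Adj u w) (hne : u ≠ w) : EdgeFlip S ((S ⊔ edge u w).deleteEdges {e}) := by
  have hE := edgeSet_sup_edge_deleteEdges (S := S) hne (e := e) (by rintro rfl; exact huw he)
  exact ⟨e, he, by simp, s(u, w), by rw [hE]; exact Or.inr rfl, huw, hE⟩

lemma neighborSet_sup_edge_deleteEdges_subset {u w v : V} (e : Sym2 V) (hvu : v ≠ u)
    (hvw : v ≠ w) : ((S ⊔ edge u w).deleteEdges {e}).neighborSet v ⊆ S.neighborSet v := by
  intro x hx
  simp only [mem_neighborSet, deleteEdges_adj, sup_adj, edge_adj] at hx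
  grind [mem_neighborSet]

lemma neighborSet_sup_edge_deleteEdges_of_neighborSet_eq {u w x : V}
    (hw : S.neighborSet w = {x}) (huw : ¬ S.Adj u w) (hne : u ≠ w) :
    ((S ⊔ edge u w).deleteEdges {s(x, w)}).neighborSet w = {u} := by
  ext y
  have hy : S.Adj w y ↔ y = x := Set.ext_iff.mp hw y
  simp only [mem_neighborSet, deleteEdges_adj, sup_adj, edge_adj, Set.mem_singleton_iff,
    Sym2.eq_iff] at hy ⊢
  grind [S.adj_symm]

lemma notMem_internalNodes_of_neighborSet_subset [Nontrivial V] {H : SimpleGraph V}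
    (hH : H.Preconnected) {v : V} (hsub : H.neighborSet v ⊆ S.neighborSet v)
    (hv : v ∉ internalNodes S) : v ∉ internalNodes H := by
  simp only [internalNodes, Set.mem_ofPred_eq, not_not, Set.ncard_eq_one] at hv ⊢
  obtain ⟨x, hx⟩ := hv
  obtain ⟨y, hy⟩ := exists_ne v
  exact ⟨x, ((hH v y).nonempty_neighborSet_left hy.symm).subset_singleton_iff.mp (hx ▸ hsub)⟩

lemma neighborSet_eq_singleton_of_notMem_internalNodes {H : SimpleGraph V} {v y : V}
    (hv : v ∉ internalNodes H) (hy : H.Adj v y) : H.neighborSet v = {y} := by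
  simp only [internalNodes, Set.mem_ofPred_eq, not_not, Set.ncard_eq_one] at hv
  obtain ⟨x, hx⟩ := hv
  rwa [show y = x from Set.mem_singleton_iff.mp (hx ▸ hy)]

lemma IsAcyclic.exists_mem_edges_notMem_edgeSet {u w : V} (hD : D.IsAcyclic) (hDuw : D.Adj u w)
    {p : S.Walk u w} (hp : p.IsPath) (huw : ¬ S.Adj u w) : ∃ e ∈ p.edges, e ∉ D.edgeSet := by
  by_contra! h
  have hpq : (⟨p.transfer D h, hp.transfer h⟩ : D.Path u w) = Path.singleton hDuw :=
    (hD.subsingleton_path u w).elim _ _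
  have hedges := congrArg (fun q : D.Path u w => q.1.edges) hpq
  simp only [Walk.edges_transfer, Path.singleton_coe, Walk.edges_cons, Walk.edges_nil] at hedges
  exact huw (p.adj_of_mem_edges (hedges ▸ List.mem_singleton_self _))

end SimpleGraph

section Transformation

variable {V : Type*} {G D S : SimpleGraph V} {I : Set V}

lemma exists_step_of_not_le (hD : IsSpanningTree G D) (hDI : internalNodes D ⊆ I)
    (hDedge : ∀ u w, D.Adj u w → u ∈ I ∨ w ∈ I)
    (hS : IsSpanningTree G S) (hSI : internalNodes S ⊆ I) (hDS : ¬ D ≤ S) :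
    ∃ S', Step G (fun X => internalNodes X ⊆ I) S S' ∧
      D.edgeSet \ S'.edgeSet ⊂ D.edgeSet \ S.edgeSet := by
  obtain ⟨u, w, huI, hDuw, hSuw⟩ : ∃ u w, u ∈ I ∧ D.Adj u w ∧ ¬ S.Adj u w := by
    obtain ⟨u, w, hDuw, hSuw⟩ : ∃ u w, D.Adj u w ∧ ¬ S.Adj u w := by
      by_contra! h
      exact hDS fun u w => h u w
    rcases hDedge u w hDuw with hu | hw
    · exact ⟨u, w, hu, hDuw, hSuw⟩
    · exact ⟨w, u, hw, hDuw.symm, fun h => hSuw h.symm⟩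
  have hne : u ≠ w := hDuw.ne
  have : Nontrivial V := ⟨⟨u, w, hne⟩⟩
  obtain ⟨p, hp⟩ := hS.2.connected.exists_isPath u w
  -- If `w` is a leaf of `S`, remove its only edge, so that it stays a leaf.
  obtain ⟨e, hep, heD, hleaf⟩ : ∃ e ∈ p.edges, e ∉ D.edgeSet ∧
      (w ∉ I → S.neighborSet w = {p.penultimate} ∧ e = s(p.penultimate, w)) := by
    by_cases hwI : w ∈ I
    · obtain ⟨e, hep, heD⟩ := hD.2.isAcyclic.exists_mem_edges_notMem_edgeSet hDuw hp hSuw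
      exact ⟨e, hep, heD, fun h => (h hwI).elim⟩
    · have hnil : ¬ p.Nil := Walk.not_nil_of_ne hne
      have hwS := neighborSet_eq_singleton_of_notMem_internalNodes (fun h => hwI (hSI h))
        (p.adj_penultimate hnil).symm
      have hwD := neighborSet_eq_singleton_of_notMem_internalNodes (fun h => hwI (hDI h))
        hDuw.symm
      refine ⟨_, Walk.mk_penultimate_end_mem_edges hnil, fun he => hSuw ?_, fun _ => ⟨hwS, rfl⟩⟩
      have hpu : p.penultimate ∈ D.neighborSet w := by
        rwa [Sym2.eq_swap, mem_edgeSet] at he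
      rw [hwD, Set.mem_singleton_iff] at hpu
      exact hpu ▸ p.adj_penultimate hnil
  set S' := (S ⊔ edge u w).deleteEdges {e}
  have hS'tree : S'.IsTree := hS.2.sup_edge_deleteEdges hp hep hSuw
  have hE : S'.edgeSet = (S.edgeSet \ {e}) ∪ {s(u, w)} :=
    edgeSet_sup_edge_deleteEdges hne (by rintro rfl; exact heD hDuw)
  have hS'I : internalNodes S' ⊆ I := by
    intro v hv
    by_contra hvI
    rcases eq_or_ne v u with rfl | hvu
    · exact hvI huI
    rcases eq_or_ne v w with rfl | hvw
    · obtain ⟨-, rfl⟩ := hleaf hvI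
      have hvS' : S'.neighborSet v = {u} :=
        neighborSet_sup_edge_deleteEdges_of_neighborSet_eq (hleaf hvI).1 hSuw hne
      exact hv (by simp [hvS'])
    exact notMem_internalNodes_of_neighborSet_subset hS'tree.connected.preconnected
      (neighborSet_sup_edge_deleteEdges_subset e hvu hvw) (fun h => hvI (hSI h)) hv
  have hS'G : S' ≤ G :=
    (deleteEdges_le _).trans (sup_le hS.1 ((edge_le_iff _).mpr (Or.inr (hD.1 hDuw))))
  have hsub : D.edgeSet \ S'.edgeSet ⊆ D.edgeSet \ S.edgeSet := by
    rintro z ⟨hzD, hzS'⟩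
    refine ⟨hzD, fun hzS => hzS' ?_⟩
    rw [hE]
    exact Or.inl ⟨hzS, fun h => heD (Set.mem_singleton_iff.mp h ▸ hzD)⟩
  refine ⟨S', ⟨hS, ⟨hS'G, hS'tree⟩, hSI, hS'I,
    edgeFlip_sup_edge_deleteEdges (p.edges_subset_edgeSet hep) hSuw hne⟩,
    (Set.ssubset_iff_of_subset hsub).mpr ⟨s(u, w), ⟨hDuw, hSuw⟩, fun h => h.2 ?_⟩⟩
  rw [hE]
  exact Or.inr rfl

theorem transformable_of_internalNodes_subset [Finite V] (hD : IsSpanningTree G D)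
    (hDI : internalNodes D ⊆ I) (hDedge : ∀ u w, D.Adj u w → u ∈ I ∨ w ∈ I)
    (hS : IsSpanningTree G S) (hSI : internalNodes S ⊆ I) :
    Transformable G (fun X => internalNodes X ⊆ I) S D := by
  induction h : (D.edgeSet \ S.edgeSet).ncard using Nat.strong_induction_on generalizing S with
  | _ n ih =>
    by_cases hDS : D ≤ S
    · obtain rfl : D = S := (isTree_iff_maximal_isAcyclic.mp hD.2).2.eq_of_le hS.2.isAcyclic hDS
      exact .refl
    obtain ⟨S', hstep, hlt⟩ := exists_step_of_not_le hD hDI hDedge hS hSI hDS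
    exact .head hstep
      (ih _ (h ▸ Set.ncard_lt_ncard hlt (Set.toFinite _)) hstep.2.1 hstep.2.2.2.1 rfl)

end Transformation

section DoubleStar

variable {V : Type*} {A B : Set V} {a b : V}

def doubleStar (A B : Set V) (a b : V) : SimpleGraph V :=
  SimpleGraph.fromRel fun u v => u = a ∧ v ∈ B ∨ u = b ∧ v ∈ A

lemma doubleStar_adj {u v : V} : (doubleStar A B a b).Adj u v ↔
    u ≠ v ∧ (u = a ∧ v ∈ B ∨ u = b ∧ v ∈ A ∨ v = a ∧ u ∈ B ∨ v = b ∧ u ∈ A) := by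
  simp only [doubleStar, fromRel_adj]
  tauto

lemma doubleStar_le {G : SimpleGraph V} (haA : a ∈ A) (hbB : b ∈ B)
    (hjoin : ∀ x ∈ A, ∀ y ∈ B, G.Adj x y) : doubleStar A B a b ≤ G := by
  intro u v huv
  rcases doubleStar_adj.mp huv with ⟨-, ⟨rfl, hv⟩ | ⟨rfl, hv⟩ | ⟨rfl, hu⟩ | ⟨rfl, hu⟩⟩
  · exact hjoin u haA v hv
  · exact (hjoin v hv u hbB).symm
  · exact (hjoin v haA u hu).symm
  · exact hjoin u hu v hbB

lemma neighborSet_doubleStar_subsingleton (hd : Disjoint A B) {v : V} (hva : v ≠ a)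
    (hvb : v ≠ b) : ((doubleStar A B a b).neighborSet v).Subsingleton := by
  intro x hx y hy
  have hAB := Set.disjoint_left.mp hd
  simp only [mem_neighborSet, doubleStar_adj] at hx hy
  grind

lemma doubleStar_connected (hd : Disjoint A B) (hcov : A ∪ B = Set.univ) (haA : a ∈ A)
    (hbB : b ∈ B) : (doubleStar A B a b).Connected := by
  have hab : a ≠ b := fun h => Set.disjoint_left.mp hd haA (h ▸ hbB)
  have hreach : ∀ v, (doubleStar A B a b).Reachable v b := by
    intro v
    rcases (Set.mem_union v A B).mp (hcov ▸ Set.mem_univ v) with hvA | hvB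
    · have hvb : v ≠ b := fun h => Set.disjoint_left.mp hd hvA (h ▸ hbB)
      exact (doubleStar_adj.mpr ⟨hvb, by tauto⟩).reachable
    rcases eq_or_ne v b with rfl | hvb
    · rfl
    have hva : v ≠ a := fun h => Set.disjoint_left.mp hd haA (h ▸ hvB)
    exact (doubleStar_adj.mpr ⟨hva, by tauto⟩).reachable.trans
      (doubleStar_adj.mpr ⟨hab, by tauto⟩).reachable
  exact (connected_iff_exists_forall_reachable _).mpr ⟨b, fun v => (hreach v).symm⟩

lemma doubleStar_isTree (hd : Disjoint A B) (hcov : A ∪ B = Set.univ) (haA : a ∈ A)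
    (hbB : b ∈ B) : (doubleStar A B a b).IsTree :=
  ⟨doubleStar_connected hd hcov haA hbB, isAcyclic_of_neighborSet_subsingleton fun _ hva hvb =>
    neighborSet_doubleStar_subsingleton hd hva hvb⟩

lemma internalNodes_doubleStar_subset (hd : Disjoint A B) (hcov : A ∪ B = Set.univ)
    (haA : a ∈ A) (hbB : b ∈ B) : internalNodes (doubleStar A B a b) ⊆ {a, b} := by
  intro v hv
  by_contra! hvab
  simp only [Set.mem_insert_iff, Set.mem_singleton_iff, not_or] at hvab
  have hab : a ≠ b := fun h => Set.disjoint_left.mp hd haA (h ▸ hbB)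
  have : Nontrivial V := ⟨⟨a, b, hab⟩⟩
  obtain ⟨x, hx⟩ :=
    ((doubleStar_connected hd hcov haA hbB).preconnected v a).nonempty_neighborSet_left hvab.1
  have hvx := (neighborSet_doubleStar_subsingleton hd hvab.1 hvab.2).eq_singleton_of_mem hx
  exact hv (by simp [hvx])

end DoubleStar

theorem join_transform_to_two_internal_nodes_general
    {V : Type*} [Fintype V] (G : SimpleGraph V) (A B : Set V)
    (hd : Disjoint A B)
    (hcov : A ∪ B = Set.univ)
    (hjoin : ∀ a ∈ A, ∀ b ∈ B, G.Adj a b)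
    (T : SimpleGraph V) (hT : IsSpanningTree G T)
    (hTA : (internalNodes T ∩ A).Nonempty) (hTB : (internalNodes T ∩ B).Nonempty) :
    ∃ T' : SimpleGraph V, ∃ a ∈ A, ∃ b ∈ B,
      IsSpanningTree G T' ∧ internalNodes T' ⊆ {a, b} ∧
      Transformable G (fun S => internalNodes S ⊆ internalNodes T) T T' := by
  obtain ⟨a, haT, haA⟩ := hTA
  obtain ⟨b, hbT, hbB⟩ := hTB
  have hD : IsSpanningTree G (doubleStar A B a b) :=
    ⟨doubleStar_le haA hbB hjoin, doubleStar_isTree hd hcov haA hbB⟩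
  have hDab := internalNodes_doubleStar_subset hd hcov haA hbB
  have habT : ({a, b} : Set V) ⊆ internalNodes T := Set.insert_subset haT (by simpa using hbT)
  refine ⟨doubleStar A B a b, a, haA, b, hbB, hD, hDab,
    transformable_of_internalNodes_subset hD (hDab.trans habT) (fun u w huw => ?_) hT le_rfl⟩
  rcases doubleStar_adj.mp huw with ⟨-, ⟨rfl, -⟩ | ⟨rfl, -⟩ | ⟨rfl, -⟩ | ⟨rfl, -⟩⟩
  exacts [.inl haT, .inl hbT, .inr haT, .inr hbT]

/-- If `G` is the join of two graphs on nonempty vertex sets `A` and `B`, and `T` is a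
spanning tree whose internal nodes meet both `A` and `B`, then `T` can be transformed,
never creating a new internal node, into a spanning tree with at most two internal
nodes, one in `A` and one in `B`. -/
theorem join_transform_to_two_internal_nodes
    {V : Type*} [Fintype V] (G : SimpleGraph V) (A B : Set V)
    (hA : A.Nonempty) (hB : B.Nonempty) (hd : Disjoint A B)
    (hcov : A ∪ B = Set.univ)
    (hjoin : ∀ a ∈ A, ∀ b ∈ B, G.Adj a b)
    (T : SimpleGraph V) (hT : IsSpanningTree G T)
    (hTA : (internalNodes T ∩ A).Nonempty) (hTB : (internalNodes T ∩ B).Nonempty) :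
    ∃ T' : SimpleGraph V, ∃ a ∈ A, ∃ b ∈ B,
      IsSpanningTree G T' ∧ internalNodes T' ⊆ {a, b} ∧
      Transformable G (fun S => internalNodes S ⊆ internalNodes T) T T' :=
  join_transform_to_two_internal_nodes_general G A B hd hcov hjoin T hT hTA hTB
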